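/- Let q ∈ ℂ with |q| < 1. Then ∑_{n=0}^∞ q^{n²} / (q;q²)_n = 1 + ∑_{n=1}^∞ q^{n} · (−q²;q²)_{n−1}. -/

import Mathlib

/-- Finite q-Pochhammer symbol `(x;q)_n = ∏_{k=0}^{n-1} (1 - x q^k)`. -/
noncomputable def qPoch (x q : ℂ) (n : ℕ) : ℂ := ∏ k ∈ Finset.range n, (1 - x * q ^ k)

/-- Infinite q-Pochhammer symbol `(x;q)_∞ = ∏_{k=0}^{∞} (1 - x q^k)`. -/
noncomputable def qPochInf (x q : ℂ) : ℂ := ∏' k : ℕ, (1 - x * q ^ k)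

/-- Gaussian binomial coefficient `[n k]_q`, equal to `0` for `k > n`. -/
noncomputable def gbinom (q : ℂ) (n k : ℕ) : ℂ :=
  if k ≤ n then qPoch q q n / (qPoch q q k * qPoch q q (n - k)) else 0

/-!
By the finite q-binomial theorem, `(-q²;q²)_n = ∑_k q^(k²+k) [n k]_{q²}`, so the right-hand side
is `1` plus the sum of the double series `F n k = q^(n+1) q^(k²+k) [n k]_{q²}` taken row by row.
Summing over `n` first instead, the negative q-binomial series
`∑_j [j+k k]_{q²} q^j = 1 / (q;q²)_{k+1}` turns the `k`-th column into
`q^((k+1)²) / (q;q²)_{k+1}`, the `(k+1)`-st term of the left-hand side. The interchange is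
justified by `‖[n k]_{q²}‖ ≤ (2 / (1 - ‖q‖²))^k`, which makes `F` absolutely summable.
-/

open Finset Filter Topology

lemma qPoch_zero (x q : ℂ) : qPoch x q 0 = 1 := by simp [qPoch]

lemma qPoch_succ (x q : ℂ) (n : ℕ) : qPoch x q (n + 1) = qPoch x q n * (1 - x * q ^ n) :=
  prod_range_succ _ n

lemma qPoch_add (x q : ℂ) (m n : ℕ) :
    qPoch x q (m + n) = qPoch x q m * qPoch (x * q ^ m) q n := by
  simp only [qPoch, prod_range_add, pow_add, mul_assoc]

lemma qPoch_succ' (x q : ℂ) (n : ℕ) : qPoch x q (n + 1) = (1 - x) * qPoch (x * q) q n := by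
  rw [add_comm, qPoch_add, pow_one]
  simp [qPoch]

lemma norm_qPoch_le {x q : ℂ} (hx : ‖x‖ ≤ 1) (hq : ‖q‖ ≤ 1) (n : ℕ) :
    ‖qPoch x q n‖ ≤ 2 ^ n := by
  calc ‖qPoch x q n‖ = ∏ k ∈ range n, ‖1 - x * q ^ k‖ := norm_prod _ _
    _ ≤ ∏ _k ∈ range n, (2 : ℝ) := by
      refine prod_le_prod (fun _ _ => norm_nonneg _) fun k _ => ?_
      calc ‖1 - x * q ^ k‖ ≤ 1 + ‖x‖ * ‖q‖ ^ k := by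
            simpa using norm_sub_le (1 : ℂ) (x * q ^ k)
        _ ≤ 2 := by nlinarith [pow_le_one₀ (n := k) (norm_nonneg q) hq, norm_nonneg x]
    _ = 2 ^ n := by simp

lemma one_sub_norm_pow_le_norm_qPoch {x q : ℂ} (hx : ‖x‖ ≤ 1) (hq : ‖q‖ ≤ 1) (n : ℕ) :
    (1 - ‖x‖) ^ n ≤ ‖qPoch x q n‖ := by
  calc (1 - ‖x‖) ^ n = ∏ _k ∈ range n, (1 - ‖x‖) := by simp
    _ ≤ ∏ k ∈ range n, ‖1 - x * q ^ k‖ := by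
      refine prod_le_prod (fun _ _ => sub_nonneg.2 hx) fun k _ => ?_
      calc 1 - ‖x‖ ≤ 1 - ‖x‖ * ‖q‖ ^ k := by
            nlinarith [pow_le_one₀ (n := k) (norm_nonneg q) hq, norm_nonneg x]
        _ ≤ ‖1 - x * q ^ k‖ := by simpa using norm_sub_norm_le (1 : ℂ) (x * q ^ k)
    _ = ‖qPoch x q n‖ := (norm_prod _ _).symm

lemma qPoch_ne_zero {x q : ℂ} (hx : ‖x‖ < 1) (hq : ‖q‖ ≤ 1) (n : ℕ) : qPoch x q n ≠ 0 :=
  norm_pos_iff.1 <| (pow_pos (sub_pos.2 hx) n).trans_le <|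
    one_sub_norm_pow_le_norm_qPoch hx.le hq n

section gbinom

variable {Q : ℂ}

lemma gbinom_add (j k : ℕ) :
    gbinom Q (j + k) k = qPoch Q Q (j + k) / (qPoch Q Q k * qPoch Q Q j) := by
  rw [gbinom, if_pos (Nat.le_add_left k j), Nat.add_sub_cancel]

lemma gbinom_of_lt {n k : ℕ} (h : n < k) : gbinom Q n k = 0 := if_neg h.not_ge

section

variable (hQ : ∀ n, qPoch Q Q n ≠ 0)
include hQ

lemma gbinom_add_eq_div (j k : ℕ) :
    gbinom Q (j + k) k = qPoch (Q * Q ^ j) Q k / qPoch Q Q k := by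
  rw [gbinom_add, qPoch_add, mul_comm (qPoch Q Q k), mul_div_mul_left _ _ (hQ j)]

lemma gbinom_zero_right (n : ℕ) : gbinom Q n 0 = 1 := by
  simpa [qPoch_zero, qPoch_add] using gbinom_add_eq_div hQ n 0

lemma gbinom_self (n : ℕ) : gbinom Q n n = 1 := by
  simpa [qPoch_zero, hQ n] using gbinom_add_eq_div hQ 0 n

lemma gbinom_succ_succ (n k : ℕ) :
    gbinom Q (n + 1) (k + 1) = gbinom Q n k + Q ^ (k + 1) * gbinom Q n (k + 1) := by
  rcases lt_trichotomy n k with h | rfl | h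
  · rw [gbinom_of_lt (by omega), gbinom_of_lt h, gbinom_of_lt (by omega)]
    ring
  · rw [gbinom_self hQ, gbinom_self hQ, gbinom_of_lt n.lt_succ_self]
    ring
  obtain ⟨d, rfl⟩ : ∃ d, n = d + 1 + k := ⟨n - k - 1, by omega⟩
  rw [gbinom_add (d + 1) k, show d + 1 + k + 1 = d + 1 + (k + 1) by ring, gbinom_add,
    show d + 1 + k = d + (k + 1) by ring, gbinom_add,
    show d + 1 + (k + 1) = d + (k + 1) + 1 by ring, qPoch_succ _ _ (d + (k + 1)),
    qPoch_succ _ _ k, qPoch_succ _ _ d]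
  have hk := right_ne_zero_of_mul (qPoch_succ Q Q k ▸ hQ (k + 1))
  have hd := right_ne_zero_of_mul (qPoch_succ Q Q d ▸ hQ (d + 1))
  -- Cleared of denominators: `1 - Q^(d+k+2) = (1 - Q^(k+1)) + Q^(k+1) (1 - Q^(d+1))`.
  field_simp [hQ k, hQ d, hQ (d + (k + 1))]
  ring

end

lemma norm_gbinom_le (hQ : ‖Q‖ < 1) (n k : ℕ) : ‖gbinom Q n k‖ ≤ (2 / (1 - ‖Q‖)) ^ k := by
  rcases lt_or_ge n k with h | h
  · rw [gbinom_of_lt h, norm_zero]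
    exact pow_nonneg (div_nonneg zero_le_two (sub_nonneg.2 hQ.le)) k
  obtain ⟨j, rfl⟩ := Nat.exists_eq_add_of_le' h
  have hQj : ‖Q * Q ^ j‖ ≤ 1 := by
    rw [← pow_succ', norm_pow]
    exact pow_le_one₀ (norm_nonneg Q) hQ.le
  rw [gbinom_add_eq_div (qPoch_ne_zero hQ hQ.le), norm_div, div_pow]
  exact div_le_div₀ (by positivity) (norm_qPoch_le hQj hQ.le k) (pow_pos (sub_pos.2 hQ) k)
    (one_sub_norm_pow_le_norm_qPoch hQ.le hQ.le k)

end gbinom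

section qBinomial

variable {Q : ℂ}

theorem qPoch_neg_eq_sum_gbinom (hQ : ∀ n, qPoch Q Q n ≠ 0) (n : ℕ) (z : ℂ) :
    qPoch (-z) Q n = ∑ k ∈ range (n + 1), Q ^ k.choose 2 * z ^ k * gbinom Q n k := by
  induction n generalizing z with
  | zero => simp [qPoch_zero, gbinom_zero_right hQ]
  | succ n ih =>
    set g : ℕ → ℂ := fun k => Q ^ k.choose 2 * (z * Q) ^ k * gbinom Q n k
    have hshift : ∑ k ∈ range (n + 1), g (k + 1) = qPoch (-(z * Q)) Q n - 1 := by
      have h := (sum_range_succ' g (n + 1)).symm.trans (sum_range_succ g (n + 1))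
      rw [ih]
      simp [g, gbinom_zero_right hQ, gbinom_of_lt n.lt_succ_self] at h ⊢
      linear_combination h
    have hterm (k : ℕ) :
        Q ^ (k + 1).choose 2 * z ^ (k + 1) * gbinom Q (n + 1) (k + 1) = z * g k + g (k + 1) := by
      simp only [g, gbinom_succ_succ hQ, Nat.choose_succ_succ' k 1, Nat.choose_one_right]
      ring
    rw [sum_range_succ', sum_congr rfl fun k _ => hterm k, sum_add_distrib, ← mul_sum, hshift,
      ← ih, qPoch_succ', sub_neg_eq_add, neg_mul]
    simp [gbinom_zero_right hQ]
    ring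

lemma summable_gbinom_mul_pow (hQ : ‖Q‖ < 1) {z : ℂ} (hz : ‖z‖ < 1) (k : ℕ) :
    Summable fun j => gbinom Q (j + k) k * z ^ j := by
  refine .of_norm_bounded ((summable_geometric_of_lt_one (norm_nonneg z) hz).mul_left
    ((2 / (1 - ‖Q‖)) ^ k)) fun j => ?_
  rw [norm_mul, norm_pow]
  exact mul_le_mul_of_nonneg_right (norm_gbinom_le hQ _ _) (by positivity)

theorem hasSum_gbinom_mul_pow (hQ : ‖Q‖ < 1) {z : ℂ} (hz : ‖z‖ < 1) (k : ℕ) :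
    HasSum (fun j => gbinom Q (j + k) k * z ^ j) (qPoch z Q (k + 1))⁻¹ := by
  have hQ' := qPoch_ne_zero hQ hQ.le
  induction k with
  | zero =>
    simpa [gbinom_zero_right hQ', qPoch] using hasSum_geometric_of_norm_lt_one hz
  | succ k ih =>
    set c : ℕ → ℂ := fun j => gbinom Q (j + (k + 1)) (k + 1) * z ^ j
    obtain ⟨S, hS⟩ : Summable c := summable_gbinom_mul_pow hQ hz (k + 1)
    have hc : HasSum (fun j => c (j + 1)) (S - 1) := by
      simpa [c, gbinom_self hQ'] using (hasSum_nat_add_iff' 1).2 hS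
    have hb : HasSum (fun j => gbinom Q (j + 1 + k) k * z ^ (j + 1))
        ((qPoch z Q (k + 1))⁻¹ - 1) := by
      simpa [gbinom_self hQ'] using (hasSum_nat_add_iff' 1).2 ih
    -- Pascal's rule makes the tail of `c` the tail of the series for `k` plus `z Q^(k+1) c`.
    have hc' : HasSum (fun j => c (j + 1))
        ((qPoch z Q (k + 1))⁻¹ - 1 + z * Q ^ (k + 1) * S) := by
      have hrec (j : ℕ) :
          c (j + 1) = gbinom Q (j + 1 + k) k * z ^ (j + 1) + z * Q ^ (k + 1) * c j := by
        simp only [c]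
        rw [show j + 1 + (k + 1) = j + (k + 1) + 1 by ring, gbinom_succ_succ hQ' (j + (k + 1)) k,
          show j + 1 + k = j + (k + 1) by ring]
        ring
      rw [show (fun j => c (j + 1)) = _ from funext hrec]
      exact hb.add (hS.mul_left (z * Q ^ (k + 1)))
    have hP := qPoch_ne_zero hz hQ.le (k + 2)
    rw [qPoch_succ] at hP ⊢
    convert hS using 1
    refine (eq_inv_of_mul_eq_one_left ?_).symm
    linear_combination
      qPoch z Q (k + 1) * hc.unique hc' + mul_inv_cancel₀ (left_ne_zero_of_mul hP)

end qBinomial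

lemma summable_pow_sq_mul_pow {a : ℝ} (c : ℝ) (ha₀ : 0 ≤ a) (ha₁ : a < 1) :
    Summable fun k : ℕ => a ^ (k ^ 2) * c ^ k := by
  have hlim : Tendsto (fun k : ℕ => a ^ k * c) atTop (𝓝 0) := by
    simpa using (tendsto_pow_atTop_nhds_zero_of_lt_one ha₀ ha₁).mul_const c
  refine .of_norm_bounded_eventually_nat summable_geometric_two ?_
  filter_upwards [hlim.norm.eventually (ge_mem_nhds (by norm_num : ‖(0 : ℝ)‖ < 1 / 2))] with k hk
  rw [sq, pow_mul, ← mul_pow, norm_pow]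
  exact pow_le_pow_left₀ (norm_nonneg _) hk k

lemma pow_sq_add_self_eq {M : Type*} [Monoid M] (x : M) (k : ℕ) :
    x ^ (k ^ 2 + k) = (x ^ 2) ^ k.choose 2 * (x ^ 2) ^ k := by
  rw [← pow_mul, ← pow_mul, ← pow_add]
  congr 1
  induction k with
  | zero => rfl
  | succ k ih =>
    rw [Nat.choose_succ_succ', Nat.choose_one_right]
    linarith

noncomputable def psiTerm (q : ℂ) (n k : ℕ) : ℂ :=
  q ^ (n + 1) * (q ^ (k ^ 2 + k) * gbinom (q ^ 2) n k)

section psiTerm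

variable {q : ℂ} (hq : ‖q‖ < 1)
include hq

lemma norm_pow_two_lt_one : ‖q ^ 2‖ < 1 := by
  rw [norm_pow]
  exact pow_lt_one₀ (norm_nonneg q) hq two_ne_zero

lemma summable_uncurry_psiTerm : Summable (Function.uncurry (psiTerm q)) := by
  set C := 2 / (1 - ‖q ^ 2‖)
  have hrow : Summable fun n : ℕ => ‖q‖ ^ (n + 1) :=
    (summable_nat_add_iff 1).2 (summable_geometric_of_lt_one (norm_nonneg q) hq)
  have hcol : Summable fun k : ℕ => ‖q‖ ^ (k ^ 2 + k) * C ^ k := by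
    refine (summable_pow_sq_mul_pow (‖q‖ * C) (norm_nonneg q) hq).congr fun k => ?_
    ring
  refine .of_norm_bounded (hrow.mul_of_nonneg hcol (fun _ => by positivity) fun _ => ?_) ?_
  · have : 0 ≤ C := div_nonneg zero_le_two (sub_nonneg.2 (norm_pow_two_lt_one hq).le)
    positivity
  rintro ⟨n, k⟩
  simp only [Function.uncurry_apply_pair, psiTerm, norm_mul, norm_pow]
  gcongr
  exact norm_gbinom_le (norm_pow_two_lt_one hq) n k

lemma tsum_psiTerm_row (n : ℕ) :
    ∑' k, psiTerm q n k = q ^ (n + 1) * qPoch (-q ^ 2) (q ^ 2) n := by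
  have hQ := norm_pow_two_lt_one hq
  rw [tsum_eq_sum (s := range (n + 1)) fun k hk => ?_,
    qPoch_neg_eq_sum_gbinom (qPoch_ne_zero hQ hQ.le), mul_sum]
  · simp only [psiTerm, pow_sq_add_self_eq q]
  · rw [psiTerm, gbinom_of_lt (by simpa using hk), mul_zero, mul_zero]

lemma hasSum_psiTerm_column (k : ℕ) :
    HasSum (fun n => psiTerm q n k) (q ^ ((k + 1) ^ 2) / qPoch q (q ^ 2) (k + 1)) := by
  rw [← hasSum_nat_add_iff' k, sum_eq_zero fun n hn => by
    rw [psiTerm, gbinom_of_lt (mem_range.1 hn), mul_zero, mul_zero], sub_zero, div_eq_mul_inv]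
  have hterm (j : ℕ) :
      psiTerm q (j + k) k = q ^ ((k + 1) ^ 2) * (gbinom (q ^ 2) (j + k) k * q ^ j) := by
    rw [psiTerm]
    ring
  rw [show (fun n => psiTerm q (n + k) k) = _ from funext hterm]
  exact (hasSum_gbinom_mul_pow (norm_pow_two_lt_one hq) hq k).mul_left _

end psiTerm

theorem stmt10 (q : ℂ) (hq : ‖q‖ < 1) :
    ∑' n : ℕ, q ^ (n ^ 2) / qPoch q (q ^ 2) n
      = 1 + ∑' n : ℕ, q ^ (n + 1) * qPoch (-q ^ 2) (q ^ 2) n := by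
  have hF := summable_uncurry_psiTerm hq
  have hcol (k : ℕ) := (hasSum_psiTerm_column hq k).tsum_eq
  have hsum : Summable fun n : ℕ => q ^ (n ^ 2) / qPoch q (q ^ 2) n :=
    (summable_nat_add_iff 1).1 (hF.prod_symm.prod.congr hcol)
  rw [hsum.tsum_eq_zero_add, ← tsum_congr hcol, hF.tsum_comm, tsum_congr (tsum_psiTerm_row hq)]
  simp [qPoch_zero]
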